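/- The two-stage method Q* = Qⁿ + (Δt/2)L(Qⁿ) + (Δt²/8)∂ₜL(Qⁿ), Qⁿ⁺¹ = Qⁿ + Δt L(Qⁿ) + (Δt²/6)(∂ₜL(Qⁿ) + 2∂ₜL(Q*)) is fourth-order accurate for the ODE dQ/dt = L(Q): if Q is the exact solution with Q(t_n) = Qⁿ, then Qⁿ⁺¹ = Q(t_n + Δt) + O(Δt⁵), provided L is smooth and ∂ₜL is computed via the chain rule ∂ₜL(Q) = L'(Q)·L(Q). -/

import Mathlib

/-! Write `M := ∂ₜL = L'·L`. Along the exact solution `Q'' = M(Q)`, `Q''' = M'(Q) L(Q)` and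
`Q'''' = M''(Q) L(Q)² + M'(Q) M(Q)`, so Taylor's theorem expands `Q(tₙ + Δt)` up to `O(Δt⁵)`.
The stage value is `Q* = Qⁿ + u` with `u = Δt L/2 + Δt² M/8 = O(Δt)`, hence
`M(Q*) = M + M' u + M'' u²/2 + O(Δt³)`. Since `M(Q*)` enters the update with weight `Δt²/3`,
this remainder is `O(Δt⁵)`, and expanding `u` shows that the update reproduces the Taylor
polynomial of the exact solution through `Δt⁴`. -/

open Asymptotics Filter Topology
open scoped Nat

section Taylor

variable {E : Type*} [NormedAddCommGroup E] [NormedSpace ℝ E]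

theorem taylor_isBigO {f : ℝ → E} {x₀ : ℝ} {n : ℕ} (hf : ContDiff ℝ (n + 1) f) :
    (fun x => f x -
        ∑ k ∈ Finset.range (n + 1), ((k ! : ℝ)⁻¹ * (x - x₀) ^ k) • iteratedDeriv k f x₀)
      =O[𝓝 x₀] fun x => (x - x₀) ^ (n + 1) := by
  have hrem := (taylor_isLittleO_univ (x₀ := x₀) hf).isBigO
  have hterm : (fun x => (((n + 1 : ℝ) * n !)⁻¹ * (x - x₀) ^ (n + 1)) •
      iteratedDeriv (n + 1) f x₀) =O[𝓝 x₀] fun x => (x - x₀) ^ (n + 1) := by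
    refine IsBigO.of_bound (‖((n + 1 : ℝ) * n !)⁻¹‖ * ‖iteratedDeriv (n + 1) f x₀‖)
      (Eventually.of_forall fun x => le_of_eq ?_)
    rw [norm_smul, norm_mul]
    ring
  refine (hrem.add hterm).congr_left fun x => ?_
  simp only [taylorWithinEval_succ, taylor_within_apply, iteratedDerivWithin_univ]
  abel

theorem taylor_isBigO_comp {f : ℝ → E} {x₀ : ℝ} {n : ℕ} (hf : ContDiff ℝ (n + 1) f)
    {g : ℝ → ℝ} (hg : (fun h => g h - x₀) =O[𝓝 0] fun h => h) :
    (fun h => f (g h) -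
        ∑ k ∈ Finset.range (n + 1), ((k ! : ℝ)⁻¹ * (g h - x₀) ^ k) • iteratedDeriv k f x₀)
      =O[𝓝 0] fun h => h ^ (n + 1) := by
  have hlim : Tendsto g (𝓝 0) (𝓝 x₀) :=
    tendsto_sub_nhds_zero_iff.mp (hg.trans_tendsto tendsto_id)
  exact ((taylor_isBigO hf).comp_tendsto hlim).trans (hg.pow (n + 1))

end Taylor

theorem isBigO_pow_mul_of_continuousAt {g : ℝ → ℝ} (hg : ContinuousAt g 0) (k : ℕ) :
    (fun h : ℝ => h ^ k * g h) =O[𝓝 0] fun h => h ^ k := by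
  simpa using (isBigO_refl (fun h : ℝ => h ^ k) _).mul (hg.tendsto.isBigO_one ℝ)

theorem contDiff_succ_of_hasDerivAt_comp {E : Type*} [NormedAddCommGroup E] [NormedSpace ℝ E]
    {L : E → E} {Q : ℝ → E} {n : ℕ} (hL : ContDiff ℝ n L)
    (hQ : ∀ t, HasDerivAt Q (L (Q t)) t) : ContDiff ℝ (n + 1) Q := by
  have hdiff : Differentiable ℝ Q := fun t => (hQ t).differentiableAt
  have hderiv : deriv Q = fun t => L (Q t) := funext fun t => (hQ t).deriv
  induction n with
  | zero =>
    exact contDiff_one_iff_deriv.mpr ⟨hdiff, hderiv ▸ hL.continuous.comp hdiff.continuous⟩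
  | succ n ih =>
    have hQn : ContDiff ℝ (n + 1) Q := ih (hL.of_le (by norm_cast; omega))
    refine contDiff_succ_iff_deriv.mpr ⟨hdiff, by simp, ?_⟩
    rw [hderiv]
    exact hL.comp (by exact_mod_cast hQn)

/-- The derivative of `f` along the solutions of `Q' = L(Q)`; `lieDeriv L L` is `∂ₜL`. -/
noncomputable def lieDeriv (L f : ℝ → ℝ) (y : ℝ) : ℝ := deriv f y * L y

section LieDeriv

variable {L Q : ℝ → ℝ}

theorem contDiff_lieDeriv {f : ℝ → ℝ} {n : ℕ} (hL : ContDiff ℝ n L)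
    (hf : ContDiff ℝ (n + 1) f) : ContDiff ℝ n (lieDeriv L f) :=
  hf.deriv'.mul hL

theorem contDiff_iterate_lieDeriv {m k : ℕ} (hL : ContDiff ℝ (m + k : ℕ) L) :
    ContDiff ℝ m ((lieDeriv L)^[k] L) := by
  induction k generalizing m with
  | zero => simpa using hL
  | succ k ih =>
    rw [Function.iterate_succ_apply']
    exact contDiff_lieDeriv (hL.of_le (by norm_cast; omega))
      (ih (m := m + 1) (by rwa [← add_assoc, add_right_comm] at hL))

theorem lieDeriv_lieDeriv {f : ℝ → ℝ} {y : ℝ} (hL : DifferentiableAt ℝ L y)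
    (hf : DifferentiableAt ℝ (deriv f) y) :
    lieDeriv L (lieDeriv L f) y = deriv (deriv f) y * L y ^ 2 + deriv f y * lieDeriv L L y := by
  change deriv (fun y => deriv f y * L y) y * L y = _
  rw [deriv_fun_mul hf hL, lieDeriv]
  ring

theorem HasDerivAt.comp_lieDeriv {f : ℝ → ℝ} {t : ℝ} (hQ : HasDerivAt Q (L (Q t)) t)
    (hf : DifferentiableAt ℝ f (Q t)) :
    HasDerivAt (fun s => f (Q s)) (lieDeriv L f (Q t)) t :=
  hf.hasDerivAt.comp t hQ

theorem iteratedDeriv_succ_eq_iterate_lieDeriv {n k : ℕ} (hL : ContDiff ℝ n L)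
    (hQ : ∀ t, HasDerivAt Q (L (Q t)) t) (hk : k ≤ n) :
    iteratedDeriv (k + 1) Q = fun t => (lieDeriv L)^[k] L (Q t) := by
  induction k with
  | zero => simpa [iteratedDeriv_one] using funext fun t => (hQ t).deriv
  | succ k ih =>
    have hf : ContDiff ℝ 1 ((lieDeriv L)^[k] L) :=
      contDiff_iterate_lieDeriv (hL.of_le (by norm_cast; omega))
    rw [iteratedDeriv_succ, ih (by omega)]
    funext t
    rw [Function.iterate_succ_apply']
    exact ((hQ t).comp_lieDeriv (hf.differentiable one_ne_zero _)).deriv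

theorem solution_sub_taylor_isBigO (hL : ContDiff ℝ 4 L) (hQ : ∀ t, HasDerivAt Q (L (Q t)) t)
    (t₀ : ℝ) :
    (fun h => Q (t₀ + h) - (Q t₀ + h * L (Q t₀) + h ^ 2 / 2 * lieDeriv L L (Q t₀)
      + h ^ 3 / 6 * (deriv (lieDeriv L L) (Q t₀) * L (Q t₀))
      + h ^ 4 / 24 * (deriv (deriv (lieDeriv L L)) (Q t₀) * L (Q t₀) ^ 2
        + deriv (lieDeriv L L) (Q t₀) * lieDeriv L L (Q t₀))))
      =O[𝓝 0] fun h => h ^ 5 := by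
  have hM : ContDiff ℝ 2 (lieDeriv L L) :=
    contDiff_iterate_lieDeriv (m := 2) (k := 1) (hL.of_le (by norm_num))
  have hderiv (k : ℕ) (hk : k ≤ 4) :=
    congrFun (iteratedDeriv_succ_eq_iterate_lieDeriv hL hQ hk) t₀
  have h1 : iteratedDeriv 1 Q t₀ = L (Q t₀) := hderiv 0 (by norm_num)
  have h2 : iteratedDeriv 2 Q t₀ = lieDeriv L L (Q t₀) := hderiv 1 (by norm_num)
  have h3 : iteratedDeriv 3 Q t₀ = deriv (lieDeriv L L) (Q t₀) * L (Q t₀) :=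
    hderiv 2 (by norm_num)
  have h4 : iteratedDeriv 4 Q t₀ = deriv (deriv (lieDeriv L L)) (Q t₀) * L (Q t₀) ^ 2
      + deriv (lieDeriv L L) (Q t₀) * lieDeriv L L (Q t₀) :=
    (hderiv 3 (by norm_num)).trans
      (lieDeriv_lieDeriv (hL.differentiable (by norm_num) _) (hM.differentiable_deriv_two _))
  have hshift : (fun h => t₀ + h - t₀) =O[𝓝 0] fun h : ℝ => h := by
    simpa using isBigO_refl (fun h : ℝ => h) (𝓝 0)
  refine (taylor_isBigO_comp (contDiff_succ_of_hasDerivAt_comp hL hQ) hshift).congr_left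
    fun h => ?_
  simp only [Finset.sum_range_succ, Finset.sum_range_zero, iteratedDeriv_zero, h1, h2, h3, h4,
    add_sub_cancel_left, smul_eq_mul, Nat.factorial]
  push_cast
  ring

end LieDeriv

/-- The two-stage fourth-order method for dQ/dt = L(Q) has local truncation
error O(Δt⁵), where ∂ₜL(Q) := L'(Q)·L(Q). -/
theorem two_stage_fourth_order
    (L : ℝ → ℝ) (hL : ContDiff ℝ 5 L)
    (Q : ℝ → ℝ) (hQ : ∀ t, HasDerivAt Q (L (Q t)) t)
    (tn : ℝ) :
    (fun Δt : ℝ =>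
      (Q tn + Δt * L (Q tn)
        + Δt ^ 2 / 6 *
          (deriv L (Q tn) * L (Q tn)
            + 2 * (deriv L (Q tn + Δt / 2 * L (Q tn)
                    + Δt ^ 2 / 8 * (deriv L (Q tn) * L (Q tn)))
                  * L (Q tn + Δt / 2 * L (Q tn)
                    + Δt ^ 2 / 8 * (deriv L (Q tn) * L (Q tn))))))
        - Q (tn + Δt))
      =O[nhds 0] (fun Δt : ℝ => Δt ^ 5) := by
  set a := Q tn
  have hL4 : ContDiff ℝ 4 L := hL.of_le (by norm_num)
  have hM : ContDiff ℝ (2 + 1) (lieDeriv L L) := contDiff_iterate_lieDeriv (k := 1) hL4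
  have hstage : (fun h : ℝ => a + h / 2 * L a + h ^ 2 / 8 * lieDeriv L L a - a)
      =O[𝓝 0] fun h => h :=
    (isBigO_pow_mul_of_continuousAt (g := fun h => L a / 2 + h / 8 * lieDeriv L L a)
      (by fun_prop) 1).congr (fun h => by ring) (fun h => pow_one h)
  have hstage_taylor := ((isBigO_refl (fun h : ℝ => h ^ 2) _).mul
    (taylor_isBigO_comp hM hstage)).trans_eventuallyEq
      (Eventually.of_forall fun h => (pow_add h 2 3).symm)
  have hexact := solution_sub_taylor_isBigO hL4 hQ tn
  -- the `Δt⁵` and `Δt⁶` terms of `Δt² M''(a) u² / 6`, which the exact expansion does not contain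
  have hrest := isBigO_pow_mul_of_continuousAt (g := fun h => deriv (deriv (lieDeriv L L)) a
    * lieDeriv L L a * (8 * L a + h * lieDeriv L L a) / 384) (by fun_prop) 5
  refine (((hstage_taylor.const_mul_left (1 / 3)).sub hexact).add hrest).congr_left fun h => ?_
  simp only [Finset.sum_range_succ, Finset.sum_range_zero, iteratedDeriv_zero,
    iteratedDeriv_succ, smul_eq_mul, Nat.factorial, lieDeriv]
  push_cast
  ring
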